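/- Let u : ℝ⁴ → ℝ be a smooth function satisfying the first heavenly equation u_{13} u_{24} − u_{14} u_{23} = 1, where u_{ij} = ∂²u/∂xⁱ∂xʲ. Then for every λ ∈ ℝ the vector fields X₁ = u_{13} ∂₄ − u_{14} ∂₃ + λ ∂₁ and X₂ = −u_{23} ∂₄ + u_{24} ∂₃ − λ ∂₂ commute. -/

import Mathlib

noncomputable def pd {n : ℕ} (i : Fin n) (f : (Fin n → ℝ) → ℝ) (p : Fin n → ℝ) : ℝ :=
  fderiv ℝ f p (Pi.single i 1)

noncomputable def lieBracket {n : ℕ} (X Y : (Fin n → ℝ) → (Fin n → ℝ)) (p : Fin n → ℝ) :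
    Fin n → ℝ :=
  fun i => (∑ j, X p j * pd j (fun q => Y q i) p) - (∑ j, Y p j * pd j (fun q => X q i) p)

lemma pd_smooth {n : ℕ} {f : (Fin n → ℝ) → ℝ} (hf : ContDiff ℝ (⊤ : ℕ∞) f) (i : Fin n) :
    ContDiff ℝ (⊤ : ℕ∞) (pd i f) :=
  (hf.fderiv_right (le_refl _)).clm_apply contDiff_const

lemma pd_const {n : ℕ} (i : Fin n) (c : ℝ) (p : Fin n → ℝ) : pd i (fun _ => c) p = 0 := by
  simp [pd]

lemma pd_neg {n : ℕ} (i : Fin n) (f : (Fin n → ℝ) → ℝ) (p : Fin n → ℝ) :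
    pd i (fun q => -f q) p = -pd i f p := by
  simp [pd, fderiv_neg]

lemma pd_sub {n : ℕ} (i : Fin n) {f g : (Fin n → ℝ) → ℝ} {p : Fin n → ℝ}
    (hf : DifferentiableAt ℝ f p) (hg : DifferentiableAt ℝ g p) :
    pd i (fun q => f q - g q) p = pd i f p - pd i g p := by
  simp [pd, fderiv_fun_sub hf hg]

lemma pd_mul {n : ℕ} (i : Fin n) {f g : (Fin n → ℝ) → ℝ} {p : Fin n → ℝ}
    (hf : DifferentiableAt ℝ f p) (hg : DifferentiableAt ℝ g p) :
    pd i (fun q => f q * g q) p = pd i f p * g p + f p * pd i g p := by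
  simp only [pd, fderiv_fun_mul hf hg, ContinuousLinearMap.add_apply, ContinuousLinearMap.smul_apply,
    smul_eq_mul]
  ring

lemma pd_apply_fderiv {n : ℕ} {f : (Fin n → ℝ) → ℝ} (hf : ContDiff ℝ (⊤ : ℕ∞) f) (i j : Fin n)
    (p : Fin n → ℝ) :
    pd i (pd j f) p = fderiv ℝ (fderiv ℝ f) p (Pi.single i 1) (Pi.single j 1) := by
  have hd : DifferentiableAt ℝ (fderiv ℝ f) p :=
    (hf.fderiv_right (m := 1) (WithTop.coe_le_coe.mpr le_top)).differentiable one_ne_zero p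
  show fderiv ℝ (fun q => fderiv ℝ f q (Pi.single j 1)) p (Pi.single i 1) = _
  rw [fderiv_clm_apply hd (differentiableAt_const _)]
  simp

lemma pd_comm {n : ℕ} {f : (Fin n → ℝ) → ℝ} (hf : ContDiff ℝ (⊤ : ℕ∞) f) (i j : Fin n)
    (p : Fin n → ℝ) : pd i (pd j f) p = pd j (pd i f) p := by
  rw [pd_apply_fderiv hf, pd_apply_fderiv hf]
  exact (hf.contDiffAt.isSymmSndFDerivAt (by rw [minSmoothness_of_isRCLikeNormedField]; exact WithTop.coe_le_coe.mpr le_top)) _ _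

lemma pd_comm_fun {n : ℕ} {f : (Fin n → ℝ) → ℝ} (hf : ContDiff ℝ (⊤ : ℕ∞) f) (i j : Fin n) :
    pd i (pd j f) = pd j (pd i f) := funext (pd_comm hf i j)

/-- The Lax pair of Plebański's first heavenly equation commutes on every solution. -/
theorem first_heavenly_lax_pair_commutes
    (u : (Fin 4 → ℝ) → ℝ) (hu : ContDiff ℝ (⊤ : ℕ∞) u)
    (heq : ∀ q : Fin 4 → ℝ,
      pd 0 (pd 2 u) q * pd 1 (pd 3 u) q - pd 0 (pd 3 u) q * pd 1 (pd 2 u) q = 1)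
    (lam : ℝ) (X₁ X₂ : (Fin 4 → ℝ) → (Fin 4 → ℝ))
    (hX₁ : ∀ p : Fin 4 → ℝ, X₁ p = ![lam, 0, -(pd 0 (pd 3 u) p), pd 0 (pd 2 u) p])
    (hX₂ : ∀ p : Fin 4 → ℝ, X₂ p = ![0, -lam, pd 1 (pd 3 u) p, -(pd 1 (pd 2 u) p)]) :
    ∀ p : Fin 4 → ℝ, lieBracket X₁ X₂ p = 0 := by
  have h2 := pd_smooth hu 2
  have h3 := pd_smooth hu 3
  have h02 := pd_smooth h2 (0 : Fin 4)
  have h12 := pd_smooth h2 (1 : Fin 4)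
  have h03 := pd_smooth h3 (0 : Fin 4)
  have h13 := pd_smooth h3 (1 : Fin 4)
  -- differentiated heavenly equation
  have hder : ∀ (j : Fin 4) (p : Fin 4 → ℝ),
      pd j (pd 0 (pd 2 u)) p * pd 1 (pd 3 u) p + pd 0 (pd 2 u) p * pd j (pd 1 (pd 3 u)) p
      - (pd j (pd 0 (pd 3 u)) p * pd 1 (pd 2 u) p + pd 0 (pd 3 u) p * pd j (pd 1 (pd 2 u)) p)
      = 0 := by
    intro j p
    have e0 : pd j (fun q => pd 0 (pd 2 u) q * pd 1 (pd 3 u) q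
        - pd 0 (pd 3 u) q * pd 1 (pd 2 u) q) p = 0 := by
      rw [show (fun q => pd 0 (pd 2 u) q * pd 1 (pd 3 u) q
        - pd 0 (pd 3 u) q * pd 1 (pd 2 u) q) = fun _ => (1 : ℝ) from funext heq]
      exact pd_const j 1 p
    rw [pd_sub (f := fun q => pd 0 (pd 2 u) q * pd 1 (pd 3 u) q)
        (g := fun q => pd 0 (pd 3 u) q * pd 1 (pd 2 u) q) j ((h02.differentiable (by simp) p).mul (h13.differentiable (by simp) p))
        ((h03.differentiable (by simp) p).mul (h12.differentiable (by simp) p)),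
      pd_mul j (h02.differentiable (by simp) p) (h13.differentiable (by simp) p),
      pd_mul j (h03.differentiable (by simp) p) (h12.differentiable (by simp) p)] at e0
    linarith [e0]
  intro p
  -- symmetry facts
  have s1 : pd 0 (pd 1 (pd 3 u)) p = pd 1 (pd 0 (pd 3 u)) p := pd_comm h3 0 1 p
  have s4 : pd 0 (pd 1 (pd 2 u)) p = pd 1 (pd 0 (pd 2 u)) p := pd_comm h2 0 1 p
  have s2 : pd 2 (pd 0 (pd 3 u)) p = pd 3 (pd 0 (pd 2 u)) p := by
    rw [pd_comm h3 2 0 p, pd_comm_fun hu 2 3]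
    exact pd_comm h2 0 3 p
  have s3 : pd 2 (pd 1 (pd 3 u)) p = pd 3 (pd 1 (pd 2 u)) p := by
    rw [pd_comm h3 2 1 p, pd_comm_fun hu 2 3]
    exact pd_comm h2 1 3 p
  -- component functions
  have f10 : (fun q => X₁ q 0) = (fun _ => lam) := by
    funext q; rw [hX₁ q]; simp
  have f11 : (fun q => X₁ q 1) = (fun _ => (0 : ℝ)) := by
    funext q; rw [hX₁ q]; simp
  have f12 : (fun q => X₁ q 2) = (fun q => -pd 0 (pd 3 u) q) := by
    funext q; rw [hX₁ q]; simp
  have f13 : (fun q => X₁ q 3) = pd 0 (pd 2 u) := by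
    funext q; rw [hX₁ q]; simp
  have f20 : (fun q => X₂ q 0) = (fun _ => (0 : ℝ)) := by
    funext q; rw [hX₂ q]; simp
  have f21 : (fun q => X₂ q 1) = (fun _ => -lam) := by
    funext q; rw [hX₂ q]; simp
  have f22 : (fun q => X₂ q 2) = pd 1 (pd 3 u) := by
    funext q; rw [hX₂ q]; simp
  have f23 : (fun q => X₂ q 3) = (fun q => -pd 1 (pd 2 u) q) := by
    funext q; rw [hX₂ q]; simp
  funext i
  have hi : i = 0 ∨ i = 1 ∨ i = 2 ∨ i = 3 := by revert i; decide
  rcases hi with rfl | rfl | rfl | rfl <;>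
    simp only [lieBracket, Fin.sum_univ_four, Fin.isValue, Pi.zero_apply,
      f10, f11, f12, f13, f20, f21, f22, f23, hX₁ p, hX₂ p, pd_const, pd_neg,
      Matrix.cons_val_zero, Matrix.cons_val_one, Matrix.head_cons,
      Matrix.cons_val_two, Matrix.tail_cons, Matrix.cons_val_three]
  · ring
  · ring
  · linear_combination (hder 3 p) + lam * s1 - pd 0 (pd 3 u) p * s3 + pd 1 (pd 3 u) p * s2
  · linear_combination (-1 : ℝ) * (hder 2 p) - lam * s4 + pd 0 (pd 2 u) p * s3
        - pd 1 (pd 2 u) p * s2
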